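/- arXiv:2603.02054 — 5 statements merged into one kernel-verified Lean document; each statement's English description precedes it below -/
import Mathlib

section
/- For every 0 ≤ s < T and every x ∈ ℝ, the restriction of x⁰_{x,s} to [s,T] is neither monotone nondecreasing nor monotone nonincreasing if and only if x_T + a0/a1 ≠ 0 and (x + a0/a1)/(x_T + a0/a1) lies in the open interval (1/cosh(a1(T−s)), cosh(a1(T−s))). -/
/-- The deterministic trajectory `x⁰_{x,s}`. -/
noncomputable def traj (a0 a1 T xT x s t : ℝ) : ℝ :=
  (x + a0 / a1) * Real.sinh (a1 * (T - t)) / Real.sinh (a1 * (T - s)) +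
    (xT + a0 / a1) * Real.sinh (a1 * (t - s)) / Real.sinh (a1 * (T - s)) - a0 / a1

private lemma key_ineq (A B C p q : ℝ) (hC : 0 < C)
    (hp : 1 ≤ p) (hq : 1 ≤ q) (hpq : q ≤ C * p) (hqp : p ≤ C * q)
    (h1 : 0 ≤ B - A * C) (h2 : 0 ≤ B * C - A) :
    0 ≤ B * p - A * q := by
  rcases le_or_gt A 0 with hA | hA
  · rcases le_or_gt 0 B with hB | hB
    · nlinarith
    · nlinarith [mul_le_mul_of_nonpos_left hqp hB.le,
        mul_nonneg h2 (by linarith : (0:ℝ) ≤ q)]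
  · nlinarith [mul_le_mul_of_nonneg_left hpq hA.le,
      mul_nonneg h1 (by linarith : (0:ℝ) ≤ p)]

private lemma not_mono_of_neg {F g : ℝ → ℝ} {k s T t0 : ℝ}
    (hgc : Continuous g) (hF : ∀ t, HasDerivAt F (k * g t) t)
    (hk : 0 < k) (hsT : s < T) (ht0 : t0 ∈ Set.Icc s T) (hneg : g t0 < 0) :
    ¬ MonotoneOn F (Set.Icc s T) := by
  intro hM
  obtain ⟨δ, hδpos, hδ⟩ := Metric.continuousAt_iff.mp hgc.continuousAt (-g t0) (by linarith)
  set u := max s (t0 - δ / 2) with hu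
  set v := min T (t0 + δ / 2) with hv
  have hu1 : u ≤ t0 := max_le ht0.1 (by linarith)
  have hv1 : t0 ≤ v := le_min ht0.2 (by linarith)
  have huv : u < v := by
    by_cases h : t0 < T
    · exact lt_of_le_of_lt hu1 (lt_min h (by linarith))
    · have ht0T : t0 = T := le_antisymm ht0.2 (le_of_not_gt h)
      have : u < t0 := max_lt (by linarith [ht0.1, ht0T]) (by linarith)
      exact lt_of_lt_of_le this hv1
  have humem : u ∈ Set.Icc s T := ⟨le_max_left _ _, le_trans hu1 ht0.2⟩
  have hvmem : v ∈ Set.Icc s T := ⟨le_trans ht0.1 hv1, min_le_left _ _⟩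
  have gneg : ∀ t ∈ Set.Icc u v, g t < 0 := by
    intro t ht
    have h1 : t0 - δ / 2 ≤ t := le_trans (le_max_right _ _) ht.1
    have h2 : t ≤ t0 + δ / 2 := le_trans ht.2 (min_le_right _ _)
    have hd : dist t t0 < δ := by
      rw [Real.dist_eq, abs_lt]; constructor <;> linarith
    have := hδ hd
    rw [Real.dist_eq] at this
    have := (abs_lt.mp this).2
    linarith
  have hSA : StrictAntiOn F (Set.Icc u v) := by
    refine strictAntiOn_of_deriv_neg (convex_Icc u v)
      (Continuous.continuousOn ?_) ?_
    · have : Differentiable ℝ F := fun t => (hF t).differentiableAt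
      exact this.continuous
    · intro t ht
      rw [interior_Icc] at ht
      rw [(hF t).deriv]
      exact mul_neg_of_pos_of_neg hk (gneg t (Set.Ioo_subset_Icc_self ht))
  have h1 := hSA (Set.left_mem_Icc.mpr huv.le) (Set.right_mem_Icc.mpr huv.le) huv
  have h2 := hM humem hvmem huv.le
  linarith

private lemma not_anti_of_pos {F g : ℝ → ℝ} {k s T t0 : ℝ}
    (hgc : Continuous g) (hF : ∀ t, HasDerivAt F (k * g t) t)
    (hk : 0 < k) (hsT : s < T) (ht0 : t0 ∈ Set.Icc s T) (hpos : 0 < g t0) :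
    ¬ AntitoneOn F (Set.Icc s T) := by
  intro hA
  have hF' : ∀ t, HasDerivAt (fun x => -F x) (k * (-g t)) t := by
    intro t
    have : HasDerivAt (fun x => -F x) (-(k * g t)) t := (hF t).neg
    convert this using 1; ring
  exact not_mono_of_neg hgc.neg hF' hk hsT ht0 (by simpa using hpos) hA.neg

private lemma mem_iff_aux (A B C : ℝ) (hC : 1 < C) :
    (B ≠ 0 ∧ A / B ∈ Set.Ioo (1 / C) C) ↔
      (B - A * C < 0 ∧ 0 < B * C - A) ∨ (0 < B - A * C ∧ B * C - A < 0) := by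
  have hC0 : 0 < C := by linarith
  have e2 : 1 / C * C = 1 := one_div_mul_cancel hC0.ne'
  constructor
  · rintro ⟨hB0, h1, h2⟩
    have e : A / B * B = A := div_mul_cancel₀ A hB0
    rcases hB0.lt_or_gt with hB | hB
    · right
      have t1 : A / B * B < 1 / C * B := mul_lt_mul_of_neg_right h1 hB
      rw [e] at t1
      have t2 : C * B < A / B * B := mul_lt_mul_of_neg_right h2 hB
      rw [e] at t2
      constructor
      · nlinarith [mul_lt_mul_of_pos_right t1 hC0]
      · nlinarith
    · left
      have t1 : 1 / C * B < A / B * B := mul_lt_mul_of_pos_right h1 hB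
      rw [e] at t1
      have t2 : A / B * B < C * B := mul_lt_mul_of_pos_right h2 hB
      rw [e] at t2
      constructor
      · nlinarith [mul_lt_mul_of_pos_right t1 hC0]
      · nlinarith
  · rintro (⟨h1, h2⟩ | ⟨h1, h2⟩)
    · have hB : 0 < B := by
        by_contra hc
        push_neg at hc
        have h3 : A * C < B * C * C := by nlinarith
        nlinarith [mul_nonneg (neg_nonneg.mpr hc) (by nlinarith : (0:ℝ) ≤ C * C - 1)]
      refine ⟨hB.ne', ?_, ?_⟩
      · rw [div_lt_div_iff₀ hC0 hB]; linarith
      · rw [div_lt_iff₀ hB]; linarith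
    · have hB : B < 0 := by
        by_contra hc
        push_neg at hc
        have h3 : B * C * C < A * C := by nlinarith
        nlinarith [mul_nonneg hc (by nlinarith : (0:ℝ) ≤ C * C - 1)]
      refine ⟨hB.ne, ?_, ?_⟩
      · rw [lt_div_iff_of_neg hB]; nlinarith
      · rw [div_lt_iff_of_neg hB]; linarith

theorem stmt_1 (a0 a1 T xT : ℝ) (ha1 : a1 ≠ 0) (hT : 0 < T)
    (s : ℝ) (hs : 0 ≤ s) (hsT : s < T) (x : ℝ) :
    (¬ MonotoneOn (traj a0 a1 T xT x s) (Set.Icc s T) ∧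
      ¬ AntitoneOn (traj a0 a1 T xT x s) (Set.Icc s T)) ↔
    (xT + a0 / a1 ≠ 0 ∧
      (x + a0 / a1) / (xT + a0 / a1) ∈
        Set.Ioo (1 / Real.cosh (a1 * (T - s))) (Real.cosh (a1 * (T - s)))) := by
  have hL : 0 < T - s := sub_pos.mpr hsT
  set A := x + a0 / a1 with hAd
  set B := xT + a0 / a1 with hBd
  set C := Real.cosh (a1 * (T - s)) with hCd
  set D := Real.sinh (a1 * (T - s)) with hDd
  set F := traj a0 a1 T xT x s with hFd
  set g : ℝ → ℝ := fun t => B * Real.cosh (a1 * (t - s)) - A * Real.cosh (a1 * (T - t))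
    with hgd
  have ha1L : a1 * (T - s) ≠ 0 := mul_ne_zero ha1 hL.ne'
  have hC1 : 1 < C := Real.one_lt_cosh.mpr ha1L
  have hC0 : 0 < C := lt_trans one_pos hC1
  have hk : 0 < a1 / D := by
    rcases ha1.lt_or_gt with h | h
    · exact div_pos_of_neg_of_neg h (Real.sinh_neg_iff.mpr (by nlinarith))
    · exact div_pos h (Real.sinh_pos_iff.mpr (by nlinarith))
  have hgc : Continuous g := by
    apply Continuous.sub
    · exact continuous_const.mul (Real.continuous_cosh.comp (by continuity))
    · exact continuous_const.mul (Real.continuous_cosh.comp (by continuity))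
  have hF : ∀ t, HasDerivAt F (a1 / D * g t) t := by
    intro t
    have h1 : HasDerivAt (fun t : ℝ => a1 * (T - t)) (-a1) t := by
      simpa using ((hasDerivAt_id t).const_sub T).const_mul a1
    have h2 : HasDerivAt (fun t : ℝ => a1 * (t - s)) a1 t := by
      simpa using ((hasDerivAt_id t).sub_const s).const_mul a1
    have h3 := (Real.hasDerivAt_sinh (a1 * (T - t))).comp t h1
    have h4 := (Real.hasDerivAt_sinh (a1 * (t - s))).comp t h2
    have h5 := (((h3.const_mul A).div_const D).add ((h4.const_mul B).div_const D)).sub_const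
      (a0 / a1)
    have hfun : F = fun u : ℝ =>
        A * Real.sinh (a1 * (T - u)) / D + B * Real.sinh (a1 * (u - s)) / D - a0 / a1 := by
      funext u; simp only [hFd, traj, hAd, hBd, hDd]
    rw [hfun]
    have h5' : HasDerivAt (fun u : ℝ =>
        A * Real.sinh (a1 * (T - u)) / D + B * Real.sinh (a1 * (u - s)) / D - a0 / a1)
        (A * (Real.cosh (a1 * (T - t)) * -a1) / D + B * (Real.cosh (a1 * (t - s)) * a1) / D) t := h5
    convert h5' using 1
    show a1 / D * (B * Real.cosh (a1 * (t - s)) - A * Real.cosh (a1 * (T - t))) = _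
    ring
  have hFdiff : Differentiable ℝ F := fun t => (hF t).differentiableAt
  have hMon : (∀ t ∈ Set.Icc s T, 0 ≤ g t) → MonotoneOn F (Set.Icc s T) := by
    intro h
    refine monotoneOn_of_deriv_nonneg (convex_Icc s T) hFdiff.continuous.continuousOn
      hFdiff.differentiableOn ?_
    intro t ht
    rw [interior_Icc] at ht
    rw [(hF t).deriv]
    exact mul_nonneg hk.le (h t (Set.Ioo_subset_Icc_self ht))
  have hAnt : (∀ t ∈ Set.Icc s T, g t ≤ 0) → AntitoneOn F (Set.Icc s T) := by
    intro h
    refine antitoneOn_of_deriv_nonpos (convex_Icc s T) hFdiff.continuous.continuousOn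
      hFdiff.differentiableOn ?_
    intro t ht
    rw [interior_Icc] at ht
    rw [(hF t).deriv]
    exact mul_nonpos_of_nonneg_of_nonpos hk.le (h t (Set.Ioo_subset_Icc_self ht))
  have egs : g s = B - A * C := by
    simp [hgd, sub_self, mul_zero, Real.cosh_zero, ← hCd]
  have egT : g T = B * C - A := by
    simp [hgd, sub_self, mul_zero, Real.cosh_zero, ← hCd]
  have hineq : ∀ t ∈ Set.Icc s T,
      Real.cosh (a1 * (T - t)) ≤ C * Real.cosh (a1 * (t - s)) ∧
      Real.cosh (a1 * (t - s)) ≤ C * Real.cosh (a1 * (T - t)) := by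
    intro t ht
    have hb1 : Real.cosh (a1 * (T - t)) ≤ C := by
      rw [hCd]
      apply Real.cosh_le_cosh.mpr
      rw [abs_mul, abs_mul]
      apply mul_le_mul_of_nonneg_left _ (abs_nonneg a1)
      rw [abs_of_nonneg (by linarith [ht.2] : (0:ℝ) ≤ T - t),
        abs_of_nonneg hL.le]
      linarith [ht.1]
    have hb2 : Real.cosh (a1 * (t - s)) ≤ C := by
      rw [hCd]
      apply Real.cosh_le_cosh.mpr
      rw [abs_mul, abs_mul]
      apply mul_le_mul_of_nonneg_left _ (abs_nonneg a1)
      rw [abs_of_nonneg (by linarith [ht.1] : (0:ℝ) ≤ t - s),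
        abs_of_nonneg hL.le]
      linarith [ht.2]
    constructor
    · exact le_trans hb1 (le_mul_of_one_le_right hC0.le (Real.one_le_cosh _))
    · exact le_trans hb2 (le_mul_of_one_le_right hC0.le (Real.one_le_cosh _))
  have hgpos : 0 ≤ g s → 0 ≤ g T → ∀ t ∈ Set.Icc s T, 0 ≤ g t := by
    intro h1 h2 t ht
    rw [egs] at h1; rw [egT] at h2
    exact key_ineq A B C _ _ hC0 (Real.one_le_cosh _) (Real.one_le_cosh _)
      (hineq t ht).1 (hineq t ht).2 h1 h2
  have hgneg : g s ≤ 0 → g T ≤ 0 → ∀ t ∈ Set.Icc s T, g t ≤ 0 := by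
    intro h1 h2 t ht
    rw [egs] at h1; rw [egT] at h2
    have := key_ineq (-A) (-B) C _ _ hC0 (Real.one_le_cosh _) (Real.one_le_cosh _)
      (hineq t ht).1 (hineq t ht).2 (by linarith) (by linarith)
    simp only [hgd]
    linarith
  have hsmem : s ∈ Set.Icc s T := Set.left_mem_Icc.mpr hsT.le
  have hTmem : T ∈ Set.Icc s T := Set.right_mem_Icc.mpr hsT.le
  rw [mem_iff_aux A B C hC1]
  constructor
  · rintro ⟨hM, hA'⟩
    rcases le_or_gt (g s) 0 with h1 | h1
    · rcases le_or_gt (g T) 0 with h2 | h2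
      · exact absurd (hAnt (hgneg h1 h2)) hA'
      · rcases eq_or_lt_of_le h1 with h1' | h1'
        · exact absurd (hMon (hgpos (le_of_eq h1'.symm) h2.le)) hM
        · left; rw [← egs, ← egT]; exact ⟨h1', h2⟩
    · rcases le_or_gt 0 (g T) with h2 | h2
      · exact absurd (hMon (hgpos h1.le h2)) hM
      · right; rw [← egs, ← egT]; exact ⟨h1, h2⟩
  · rintro (⟨h1, h2⟩ | ⟨h1, h2⟩)
    · rw [← egs] at h1; rw [← egT] at h2
      exact ⟨not_mono_of_neg hgc hF hk hsT hsmem h1,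
        not_anti_of_pos hgc hF hk hsT hTmem h2⟩
    · rw [← egs] at h1; rw [← egT] at h2
      exact ⟨not_mono_of_neg hgc hF hk hsT hTmem h2,
        not_anti_of_pos hgc hF hk hsT hsmem h1⟩
end

section
/- Let 0 ≤ s < T and x ∈ ℝ. If x + a0/a1 > 0, x_T + a0/a1 > 0, and (x + a0/a1)/(x_T + a0/a1) ∈ (1/cosh(a1(T−s)), cosh(a1(T−s))), then there exists a unique t1 ∈ (s,T) such that the derivative of x⁰_{x,s} vanishes at t1; moreover this derivative is strictly negative on [s,t1) and strictly positive on (t1,T], so that x⁰_{x,s} is strictly decreasing on [s,t1] and strictly increasing on [t1,T]. -/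
lemma aux_mul_sinh_pos (a1 u : ℝ) (ha : a1 ≠ 0) (hu : 0 < u) :
    0 < a1 * Real.sinh (a1 * u) := by
  rcases ha.lt_or_gt with h | h
  · have : a1 * u < 0 := mul_neg_of_neg_of_pos h hu
    have := Real.sinh_neg_iff.mpr this
    exact mul_pos_of_neg_of_neg h this
  · have : 0 < a1 * u := mul_pos h hu
    exact mul_pos h (Real.sinh_pos_iff.mpr this)

lemma hasDerivAt_traj (a0 a1 T xT x s t : ℝ) :
    HasDerivAt (traj a0 a1 T xT x s)
      (a1 / Real.sinh (a1 * (T - s)) *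
        ((xT + a0 / a1) * Real.cosh (a1 * (t - s)) -
          (x + a0 / a1) * Real.cosh (a1 * (T - t)))) t := by
  have h1 : HasDerivAt (fun u => a1 * (T - u)) (-a1) t := by
    simpa using ((hasDerivAt_id t).const_sub T).const_mul a1
  have h2 : HasDerivAt (fun u => a1 * (u - s)) a1 t := by
    simpa using ((hasDerivAt_id t).sub_const s).const_mul a1
  have h3 := (Real.hasDerivAt_sinh (a1 * (T - t))).comp t h1
  have h4 := (Real.hasDerivAt_sinh (a1 * (t - s))).comp t h2
  have h5 := (((h3.const_mul (x + a0 / a1)).div_const (Real.sinh (a1 * (T - s)))).add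
    ((h4.const_mul (xT + a0 / a1)).div_const (Real.sinh (a1 * (T - s))))).sub_const (a0 / a1)
  refine h5.congr_deriv ?_
  simp only [div_eq_mul_inv]
  ring

lemma hasDerivAt_f (a0 a1 T xT x s t : ℝ) :
    HasDerivAt (fun u => (xT + a0 / a1) * Real.cosh (a1 * (u - s)) -
        (x + a0 / a1) * Real.cosh (a1 * (T - u)))
      ((xT + a0 / a1) * (a1 * Real.sinh (a1 * (t - s))) +
        (x + a0 / a1) * (a1 * Real.sinh (a1 * (T - t)))) t := by
  have h1 : HasDerivAt (fun u => a1 * (T - u)) (-a1) t := by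
    simpa using ((hasDerivAt_id t).const_sub T).const_mul a1
  have h2 : HasDerivAt (fun u => a1 * (u - s)) a1 t := by
    simpa using ((hasDerivAt_id t).sub_const s).const_mul a1
  have h3 := (Real.hasDerivAt_cosh (a1 * (T - t))).comp t h1
  have h4 := (Real.hasDerivAt_cosh (a1 * (t - s))).comp t h2
  have h5 := (h4.const_mul (xT + a0 / a1)).sub (h3.const_mul (x + a0 / a1))
  refine h5.congr_deriv ?_
  ring

theorem stmt_2 (a0 a1 T xT : ℝ) (ha1 : a1 ≠ 0) (hT : 0 < T)
    (s : ℝ) (hs : 0 ≤ s) (hsT : s < T) (x : ℝ)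
    (hx : 0 < x + a0 / a1) (hxT : 0 < xT + a0 / a1)
    (hratio : (x + a0 / a1) / (xT + a0 / a1) ∈
      Set.Ioo (1 / Real.cosh (a1 * (T - s))) (Real.cosh (a1 * (T - s)))) :
    ∃ t1 ∈ Set.Ioo s T,
      deriv (traj a0 a1 T xT x s) t1 = 0 ∧
      (∀ t' ∈ Set.Ioo s T, deriv (traj a0 a1 T xT x s) t' = 0 → t' = t1) ∧
      (∀ t ∈ Set.Ico s t1, deriv (traj a0 a1 T xT x s) t < 0) ∧
      (∀ t ∈ Set.Ioc t1 T, 0 < deriv (traj a0 a1 T xT x s) t) ∧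
      StrictAntiOn (traj a0 a1 T xT x s) (Set.Icc s t1) ∧
      StrictMonoOn (traj a0 a1 T xT x s) (Set.Icc t1 T) := by
  set A := x + a0 / a1 with hA
  set B := xT + a0 / a1 with hB
  set f : ℝ → ℝ := fun u => B * Real.cosh (a1 * (u - s)) - A * Real.cosh (a1 * (T - u)) with hf
  set c := a1 / Real.sinh (a1 * (T - s)) with hc
  -- derivative formula
  have hderiv : ∀ t, deriv (traj a0 a1 T xT x s) t = c * f t := fun t =>
    (hasDerivAt_traj a0 a1 T xT x s t).deriv
  -- c > 0
  have hc_pos : 0 < c := by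
    rw [hc, div_pos_iff]
    rcases ha1.lt_or_gt with h | h
    · right
      exact ⟨h, Real.sinh_neg_iff.mpr (mul_neg_of_neg_of_pos h (sub_pos.mpr hsT))⟩
    · left
      exact ⟨h, Real.sinh_pos_iff.mpr (mul_pos h (sub_pos.mpr hsT))⟩
  -- cosh > 1
  have hC1 : 1 < Real.cosh (a1 * (T - s)) :=
    Real.one_lt_cosh.mpr (mul_ne_zero ha1 (sub_ne_zero.mpr hsT.ne'))
  have hCpos : 0 < Real.cosh (a1 * (T - s)) := by positivity
  -- f continuous
  have hf_cont : Continuous f := by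
    apply Continuous.sub
    · exact continuous_const.mul ((Real.continuous_cosh).comp (by continuity))
    · exact continuous_const.mul ((Real.continuous_cosh).comp (by continuity))
  -- f strictly monotone on [s, T]
  have hf_mono : StrictMonoOn f (Set.Icc s T) := by
    apply strictMonoOn_of_deriv_pos (convex_Icc s T) hf_cont.continuousOn
    intro t ht
    rw [interior_Icc] at ht
    rw [(hasDerivAt_f a0 a1 T xT x s t).deriv]
    have h1 := aux_mul_sinh_pos a1 (t - s) ha1 (sub_pos.mpr ht.1)
    have h2 := aux_mul_sinh_pos a1 (T - t) ha1 (sub_pos.mpr ht.2)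
    have := mul_pos hxT h1
    have := mul_pos hx h2
    positivity
  -- f s < 0 < f T
  have hfs : f s < 0 := by
    have h := hratio.1
    rw [div_lt_div_iff₀ hCpos hxT] at h
    simp only [hf, sub_self, mul_zero, Real.cosh_zero, mul_one]
    nlinarith
  have hfT : 0 < f T := by
    have h := hratio.2
    rw [div_lt_iff₀ hxT] at h
    simp only [hf, sub_self, mul_zero, Real.cosh_zero, mul_one]
    nlinarith
  -- IVT
  obtain ⟨t1, ht1, hft1⟩ : ∃ t1 ∈ Set.Ioo s T, f t1 = 0 := by
    have := intermediate_value_Ioo hsT.le hf_cont.continuousOn (a := s) (b := T)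
    obtain ⟨t1, ht1, h0⟩ := this ⟨hfs, hfT⟩
    exact ⟨t1, ht1, h0⟩
  have ht1Icc : t1 ∈ Set.Icc s T := Set.Ioo_subset_Icc_self ht1
  refine ⟨t1, ht1, ?_, ?_, ?_, ?_, ?_, ?_⟩
  · rw [hderiv, hft1, mul_zero]
  · intro t' ht' h0
    rw [hderiv] at h0
    have : f t' = 0 := by
      rcases mul_eq_zero.mp h0 with h | h
      · exact absurd h hc_pos.ne'
      · exact h
    exact hf_mono.injOn (Set.Ioo_subset_Icc_self ht') ht1Icc (this.trans hft1.symm)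
  · intro t ht
    rw [hderiv]
    have : f t < f t1 := hf_mono ⟨ht.1, (ht.2.trans ht1.2).le⟩ ht1Icc ht.2
    rw [hft1] at this
    exact mul_neg_of_pos_of_neg hc_pos this
  · intro t ht
    rw [hderiv]
    have : f t1 < f t := hf_mono ht1Icc ⟨(ht1.1.trans ht.1).le, ht.2⟩ ht.1
    rw [hft1] at this
    exact mul_pos hc_pos this
  · -- StrictAntiOn on [s, t1]
    have hcont : Continuous (traj a0 a1 T xT x s) :=
      continuous_iff_continuousAt.mpr fun t =>
        (hasDerivAt_traj a0 a1 T xT x s t).continuousAt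
    apply strictAntiOn_of_deriv_neg (convex_Icc s t1) hcont.continuousOn
    intro t ht
    rw [interior_Icc] at ht
    rw [hderiv]
    have : f t < f t1 := hf_mono ⟨ht.1.le, (ht.2.trans ht1.2).le⟩ ht1Icc ht.2
    rw [hft1] at this
    exact mul_neg_of_pos_of_neg hc_pos this
  · have hcont : Continuous (traj a0 a1 T xT x s) :=
      continuous_iff_continuousAt.mpr fun t =>
        (hasDerivAt_traj a0 a1 T xT x s t).continuousAt
    apply strictMonoOn_of_deriv_pos (convex_Icc t1 T) hcont.continuousOn
    intro t ht
    rw [interior_Icc] at ht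
    rw [hderiv]
    have : f t1 < f t := hf_mono ht1Icc ⟨(ht1.1.trans ht.1).le, ht.2.le⟩ ht.1
    rw [hft1] at this
    exact mul_pos hc_pos this
end

section
/- Assume x_T > d2 > d1 > −a0/a1 and d2 + a0/a1 ≤ (x_T + a0/a1)/cosh(a1·T). Then for every x ∈ (d1,d2) and s ∈ [0,T), there exists a unique τ ∈ (s,T) such that x⁰_{x,s}(τ) ∈ {d1,d2}; moreover x⁰_{x,s}(τ) = d2, x⁰_{x,s}(t) ∈ (d1,d2) for all t ∈ [s,τ), and the derivative of x⁰_{x,s} at τ is strictly positive (the trajectory crosses the boundary transversely). -/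
theorem stmt_4 (a0 a1 T xT d1 d2 : ℝ) (ha1 : a1 ≠ 0) (hT : 0 < T)
    (h1 : xT > d2) (h2 : d2 > d1) (h3 : d1 > -(a0 / a1))
    (h4 : d2 + a0 / a1 ≤ (xT + a0 / a1) / Real.cosh (a1 * T)) :
    ∀ x ∈ Set.Ioo d1 d2, ∀ s, 0 ≤ s → s < T →
      ∃ τ ∈ Set.Ioo s T,
        traj a0 a1 T xT x s τ = d2 ∧
        (∀ t ∈ Set.Ico s τ, traj a0 a1 T xT x s t ∈ Set.Ioo d1 d2) ∧
        0 < deriv (traj a0 a1 T xT x s) τ ∧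
        ∀ τ' ∈ Set.Ioo s T,
          (traj a0 a1 T xT x s τ' = d1 ∨ traj a0 a1 T xT x s τ' = d2) → τ' = τ := by
  rintro x ⟨hxd1, hxd2⟩ s hs0 hsT
  -- basic positivity facts
  have hS0 : Real.sinh (a1 * (T - s)) ≠ 0 := by
    rw [Real.sinh_ne_zero]
    exact mul_ne_zero ha1 (by linarith)
  have haS : 0 < a1 * Real.sinh (a1 * (T - s)) := by
    rcases lt_or_gt_of_ne ha1 with h | h
    · have : a1 * (T - s) < 0 := mul_neg_of_neg_of_pos h (by linarith)
      have := Real.sinh_neg_iff.mpr this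
      exact mul_pos_of_neg_of_neg h this
    · have : 0 < a1 * (T - s) := mul_pos h (by linarith)
      exact mul_pos h (Real.sinh_pos_iff.mpr this)
  -- derivative of the trajectory
  have hder : ∀ t : ℝ, HasDerivAt (traj a0 a1 T xT x s)
      (a1 * ((xT + a0/a1) * Real.cosh (a1 * (t - s)) - (x + a0/a1) * Real.cosh (a1 * (T - t)))
        / Real.sinh (a1 * (T - s))) t := by
    intro t
    have h1' : HasDerivAt (fun u : ℝ => a1 * (T - u)) (a1 * (-1)) t := by
      simpa using (((hasDerivAt_id t).const_sub T).const_mul a1)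
    have h2' : HasDerivAt (fun u : ℝ => a1 * (u - s)) (a1 * 1) t := by
      simpa using (((hasDerivAt_id t).sub_const s).const_mul a1)
    have h3' := ((Real.hasDerivAt_sinh _).comp t h1').const_mul (x + a0/a1)
    have h4' := ((Real.hasDerivAt_sinh _).comp t h2').const_mul (xT + a0/a1)
    have h5' := ((h3'.div_const (Real.sinh (a1 * (T - s)))).add
      (h4'.div_const (Real.sinh (a1 * (T - s))))).sub_const (a0/a1)
    refine h5'.congr_deriv ?_
    ring
  -- positivity of the derivative on [s, T]
  have hA0 : 0 < x + a0 / a1 := by linarith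
  have hcoshT : 0 < Real.cosh (a1 * T) := Real.cosh_pos _
  have hB : (d2 + a0 / a1) * Real.cosh (a1 * T) ≤ xT + a0 / a1 :=
    (le_div_iff₀ hcoshT).mp h4
  have hdpos : ∀ t : ℝ, s ≤ t → t ≤ T →
      0 < a1 * ((xT + a0/a1) * Real.cosh (a1 * (t - s)) - (x + a0/a1) * Real.cosh (a1 * (T - t)))
        / Real.sinh (a1 * (T - s)) := by
    intro t hst htT
    have hc1 : Real.cosh (a1 * (T - t)) ≤ Real.cosh (a1 * T) := by
      rw [Real.cosh_le_cosh, abs_mul, abs_mul]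
      have : |T - t| ≤ |T| := by
        rw [abs_of_nonneg (by linarith : (0:ℝ) ≤ T - t), abs_of_nonneg hT.le]
        linarith
      exact mul_le_mul_of_nonneg_left this (abs_nonneg a1)
    have hX : 0 < (xT + a0/a1) * Real.cosh (a1 * (t - s)) - (x + a0/a1) * Real.cosh (a1 * (T - t)) := by
      have hBpos : 0 < xT + a0 / a1 := by linarith [mul_pos (show (0:ℝ) < d2 + a0/a1 by linarith) hcoshT]
      have h6 : (x + a0/a1) * Real.cosh (a1 * (T - t)) < (d2 + a0/a1) * Real.cosh (a1 * T) := by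
        calc (x + a0/a1) * Real.cosh (a1 * (T - t)) ≤ (x + a0/a1) * Real.cosh (a1 * T) :=
              mul_le_mul_of_nonneg_left hc1 hA0.le
          _ < (d2 + a0/a1) * Real.cosh (a1 * T) := by
              apply mul_lt_mul_of_pos_right (by linarith) hcoshT
      have h7 : xT + a0/a1 ≤ (xT + a0/a1) * Real.cosh (a1 * (t - s)) := by
        nlinarith [Real.one_le_cosh (a1 * (t - s))]
      linarith
    have heq : a1 * ((xT + a0/a1) * Real.cosh (a1 * (t - s)) - (x + a0/a1) * Real.cosh (a1 * (T - t)))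
        / Real.sinh (a1 * (T - s))
        = (a1 * a1 * ((xT + a0/a1) * Real.cosh (a1 * (t - s)) - (x + a0/a1) * Real.cosh (a1 * (T - t))))
          / (a1 * Real.sinh (a1 * (T - s))) := by
      rw [mul_assoc, mul_div_mul_left _ _ ha1]
    rw [heq]
    exact div_pos (mul_pos (mul_self_pos.mpr ha1) hX) haS
  -- endpoint values
  have htraj_s : traj a0 a1 T xT x s s = x := by
    simp [traj, sub_self, Real.sinh_zero, mul_div_assoc, div_self hS0]
  have htraj_T : traj a0 a1 T xT x s T = xT := by
    simp [traj, sub_self, Real.sinh_zero, mul_div_assoc, div_self hS0]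
  -- continuity and strict monotonicity on [s, T]
  have hcont : ContinuousOn (traj a0 a1 T xT x s) (Set.Icc s T) :=
    fun t _ => ((hder t).continuousAt).continuousWithinAt
  have hmono : StrictMonoOn (traj a0 a1 T xT x s) (Set.Icc s T) := by
    apply strictMonoOn_of_deriv_pos (convex_Icc s T) hcont
    intro t ht
    rw [interior_Icc] at ht
    rw [(hder t).deriv]
    exact hdpos t ht.1.le ht.2.le
  -- existence of τ by IVT
  have hIVT : d2 ∈ traj a0 a1 T xT x s '' Set.Ioo s T := by
    apply intermediate_value_Ioo hsT.le hcont
    rw [htraj_s, htraj_T]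
    exact ⟨hxd2, h1⟩
  obtain ⟨τ, hτmem, hτval⟩ := hIVT
  refine ⟨τ, hτmem, hτval, ?_, ?_, ?_⟩
  · -- trajectory stays in (d1, d2) on [s, τ)
    intro t ⟨hst, htτ⟩
    have htT : t ≤ T := le_of_lt (lt_trans htτ hτmem.2)
    have ht1 : x ≤ traj a0 a1 T xT x s t := by
      rcases eq_or_lt_of_le hst with h | h
      · rw [← h, htraj_s]
      · have := (hmono (Set.left_mem_Icc.mpr (by linarith : s ≤ T)) ⟨hst, htT⟩ h).le
        rwa [htraj_s] at this
    have ht2 : traj a0 a1 T xT x s t < d2 := by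
      rw [← hτval]
      exact hmono ⟨hst, htT⟩ ⟨hτmem.1.le, hτmem.2.le⟩ htτ
    exact ⟨lt_of_lt_of_le hxd1 ht1, ht2⟩
  · -- derivative positive at τ
    rw [(hder τ).deriv]
    exact hdpos τ hτmem.1.le hτmem.2.le
  · -- uniqueness
    rintro τ' ⟨hsτ', hτ'T⟩ (h | h)
    · exfalso
      have hlt := hmono (Set.left_mem_Icc.mpr hsT.le) ⟨hsτ'.le, hτ'T.le⟩ hsτ'
      rw [htraj_s] at hlt
      rename' hlt => this
      rw [h] at this
      linarith
    · exact hmono.injOn ⟨hsτ'.le, hτ'T.le⟩ ⟨hτmem.1.le, hτmem.2.le⟩ (h.trans hτval.symm)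
end

section
/- Assume x_T > d2 > d1. Then for every x ∈ (d1,d2) and s ∈ [0,T), the infimum, over all continuously differentiable paths γ : [s,T] → ℝ with γ(s) = x for which there exists t ∈ (s,T] with γ(t) ∉ (d1,d2), of the action I(γ) = (1/2)·∫_s^T (γ'(t) − b(γ(t),t))² dt, equals 0 (each such action being nonnegative). -/
/-- The drift of the Ornstein–Uhlenbeck bridge. -/
noncomputable def drift (a0 a1 T xT x t : ℝ) : ℝ :=
  a1 * ((xT + a0 / a1) - (x + a0 / a1) * Real.cosh (a1 * (T - t))) / Real.sinh (a1 * (T - t))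

/-- The action of a path `γ` on `[s,T]`. -/
noncomputable def action (a0 a1 T xT s : ℝ) (γ : ℝ → ℝ) : ℝ :=
  (1 / 2) * ∫ t in s..T,
    (derivWithin γ (Set.Icc s T) t - drift a0 a1 T xT (γ t) t) ^ 2

/-- The explicit OU-bridge path from `x` at time `s` to `xT` at time `T`. -/
noncomputable def ouPath (a0 a1 T xT s x : ℝ) (t : ℝ) : ℝ :=
  -(a0/a1) + ((xT + a0/a1) * Real.sinh (a1*(t-s)) + (x + a0/a1) * Real.sinh (a1*(T-t)))
      / Real.sinh (a1*(T-s))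

lemma ouPath_contDiff (a0 a1 T xT s x : ℝ) : ContDiff ℝ 1 (ouPath a0 a1 T xT s x) := by
  unfold ouPath
  exact contDiff_const.add
    (((contDiff_const.mul
        (Real.contDiff_sinh.comp (contDiff_const.mul (contDiff_id.sub contDiff_const)))).add
      (contDiff_const.mul
        (Real.contDiff_sinh.comp (contDiff_const.mul (contDiff_const.sub contDiff_id))))).div_const _)

lemma ouPath_hasDerivAt (a0 a1 T xT s x t : ℝ) :
    HasDerivAt (ouPath a0 a1 T xT s x)
      (((xT + a0/a1) * (Real.cosh (a1*(t-s)) * a1) +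
        (x + a0/a1) * (Real.cosh (a1*(T-t)) * (-a1))) / Real.sinh (a1*(T-s))) t := by
  have h1 : HasDerivAt (fun u : ℝ => a1*(u-s)) a1 t := by
    simpa using ((hasDerivAt_id t).sub_const s).const_mul a1
  have h2 : HasDerivAt (fun u : ℝ => a1*(T-u)) (-a1) t := by
    simpa using ((hasDerivAt_id t).const_sub T).const_mul a1
  have hs1 : HasDerivAt (fun u : ℝ => Real.sinh (a1*(u-s))) (Real.cosh (a1*(t-s)) * a1) t :=
    (Real.hasDerivAt_sinh _).comp t h1
  have hs2 : HasDerivAt (fun u : ℝ => Real.sinh (a1*(T-u))) (Real.cosh (a1*(T-t)) * (-a1)) t :=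
    (Real.hasDerivAt_sinh _).comp t h2
  exact (((hs1.const_mul _).add (hs2.const_mul _)).div_const _).const_add _

lemma ouPath_start (a0 a1 T xT s x : ℝ) (ha1 : a1 ≠ 0) (hsT : s < T) :
    ouPath a0 a1 T xT s x s = x := by
  have hS : Real.sinh (a1*(T-s)) ≠ 0 := by
    simp only [ne_eq, Real.sinh_eq_zero]
    exact mul_ne_zero ha1 (sub_ne_zero.2 hsT.ne')
  simp [ouPath]
  field_simp
  ring

lemma ouPath_end (a0 a1 T xT s x : ℝ) (ha1 : a1 ≠ 0) (hsT : s < T) :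
    ouPath a0 a1 T xT s x T = xT := by
  have hS : Real.sinh (a1*(T-s)) ≠ 0 := by
    simp only [ne_eq, Real.sinh_eq_zero]
    exact mul_ne_zero ha1 (sub_ne_zero.2 hsT.ne')
  simp [ouPath]
  field_simp
  ring

lemma ouPath_ode (a0 a1 T xT s x : ℝ) (ha1 : a1 ≠ 0) (hsT : s < T) {t : ℝ}
    (ht : t ∈ Set.Ioo s T) :
    deriv (ouPath a0 a1 T xT s x) t = drift a0 a1 T xT (ouPath a0 a1 T xT s x t) t := by
  have ht2 : Real.sinh (a1*(T-t)) ≠ 0 := by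
    simp only [ne_eq, Real.sinh_eq_zero]
    exact mul_ne_zero ha1 (sub_ne_zero.2 ht.2.ne')
  have hS : Real.sinh (a1*(T-s)) ≠ 0 := by
    simp only [ne_eq, Real.sinh_eq_zero]
    exact mul_ne_zero ha1 (sub_ne_zero.2 hsT.ne')
  have key : a1*(T-s) = a1*(T-t) + a1*(t-s) := by ring
  rw [(ouPath_hasDerivAt a0 a1 T xT s x t).deriv]
  unfold drift ouPath
  rw [key, Real.sinh_add] at hS ⊢
  set A := Real.sinh (a1*(T-t))
  set B := Real.cosh (a1*(T-t))
  set C := Real.sinh (a1*(t-s))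
  set D := Real.cosh (a1*(t-s))
  have hS' : D * A + B * C ≠ 0 := by rw [mul_comm D A]; exact hS
  field_simp
  ring

theorem stmt_5 (a0 a1 T xT d1 d2 : ℝ) (ha1 : a1 ≠ 0) (hT : 0 < T)
    (h1 : xT > d2) (h2 : d2 > d1) :
    ∀ x ∈ Set.Ioo d1 d2, ∀ s, 0 ≤ s → s < T →
      sInf {r : ℝ | ∃ γ : ℝ → ℝ, ContDiffOn ℝ 1 γ (Set.Icc s T) ∧ γ s = x ∧
          (∃ t ∈ Set.Ioc s T, γ t ∉ Set.Ioo d1 d2) ∧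
          r = action a0 a1 T xT s γ} = 0 ∧
      ∀ r ∈ {r : ℝ | ∃ γ : ℝ → ℝ, ContDiffOn ℝ 1 γ (Set.Icc s T) ∧ γ s = x ∧
          (∃ t ∈ Set.Ioc s T, γ t ∉ Set.Ioo d1 d2) ∧
          r = action a0 a1 T xT s γ}, 0 ≤ r := by
  intro x hx s hs0 hsT
  have hnonneg : ∀ r ∈ {r : ℝ | ∃ γ : ℝ → ℝ, ContDiffOn ℝ 1 γ (Set.Icc s T) ∧ γ s = x ∧
      (∃ t ∈ Set.Ioc s T, γ t ∉ Set.Ioo d1 d2) ∧ r = action a0 a1 T xT s γ}, 0 ≤ r := by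
    rintro r ⟨γ, _, _, _, rfl⟩
    unfold action
    have : 0 ≤ ∫ t in s..T, (derivWithin γ (Set.Icc s T) t - drift a0 a1 T xT (γ t) t) ^ 2 :=
      intervalIntegral.integral_nonneg hsT.le (fun u _ => sq_nonneg _)
    linarith
  refine ⟨?_, hnonneg⟩
  have hmem : (0 : ℝ) ∈ {r : ℝ | ∃ γ : ℝ → ℝ, ContDiffOn ℝ 1 γ (Set.Icc s T) ∧ γ s = x ∧
      (∃ t ∈ Set.Ioc s T, γ t ∉ Set.Ioo d1 d2) ∧ r = action a0 a1 T xT s γ} := by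
    refine ⟨ouPath a0 a1 T xT s x, (ouPath_contDiff a0 a1 T xT s x).contDiffOn,
      ouPath_start a0 a1 T xT s x ha1 hsT, ⟨T, ⟨hsT, le_refl T⟩, ?_⟩, ?_⟩
    · rw [ouPath_end a0 a1 T xT s x ha1 hsT]
      intro hmem
      exact absurd hmem.2 (not_lt.2 h1.le)
    · unfold action
      have hzero : ∫ t in s..T,
          (derivWithin (ouPath a0 a1 T xT s x) (Set.Icc s T) t -
            drift a0 a1 T xT (ouPath a0 a1 T xT s x t) t) ^ 2 = 0 := by
        rw [← intervalIntegral.integral_zero (a := s) (b := T) (μ := MeasureTheory.volume)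
          (E := ℝ)]
        apply intervalIntegral.integral_congr_ae
        have hT0 : ∀ᵐ u : ℝ, u ≠ T := by
          refine MeasureTheory.ae_iff.2 ?_
          simp
        filter_upwards [hT0] with u hu hmemu
        rw [Set.uIoc_of_le hsT.le] at hmemu
        have huo : u ∈ Set.Ioo s T := ⟨hmemu.1, lt_of_le_of_ne hmemu.2 hu⟩
        have hd : derivWithin (ouPath a0 a1 T xT s x) (Set.Icc s T) u =
            deriv (ouPath a0 a1 T xT s x) u :=
          ((ouPath_contDiff a0 a1 T xT s x).differentiable one_ne_zero u).derivWithin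
            ((uniqueDiffOn_Icc hsT) u (Set.mem_Icc_of_Ioo huo))
        rw [hd, ouPath_ode a0 a1 T xT s x ha1 hsT huo]
        simp
      rw [hzero]; ring
  have hbdd : BddBelow {r : ℝ | ∃ γ : ℝ → ℝ, ContDiffOn ℝ 1 γ (Set.Icc s T) ∧ γ s = x ∧
      (∃ t ∈ Set.Ioc s T, γ t ∉ Set.Ioo d1 d2) ∧ r = action a0 a1 T xT s γ} :=
    ⟨0, fun r hr => hnonneg r hr⟩
  exact le_antisymm (csInf_le hbdd hmem) (le_csInf ⟨0, hmem⟩ (fun r hr => hnonneg r hr))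
end

section
/- Let T > 0 and x_T ∈ ℝ, and consider the Brownian bridge drift b(x,t) = (x_T − x)/(T − t) for t ∈ [0,T). For all 0 ≤ s < t < T and all x, d ∈ ℝ, the infimum, over all continuously differentiable paths γ : [s,t] → ℝ with γ(s) = x and γ(t) = d, of (1/2)·∫_s^t (γ'(v) − b(γ(v),v))² dv equals (1/2)·((d−x)²/(t−s) + (d−x_T)²/(T−t) − (x−x_T)²/(T−s)), which also equals (d(T−s) − x(T−t) − x_T(t−s))² / (2(T−s)(T−t)(t−s)). -/
open Set MeasureTheory intervalIntegral

private lemma alg0 (xT a g T v : ℝ) (hT : T - v ≠ 0) :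
    (xT - a) ^ 2 / (T - v) ^ 2 - 2 * g * ((xT - a) / (T - v)) =
    ((2:ℕ):ℝ) * (xT - a) ^ 1 * (-g) * (T - v)⁻¹ + (xT - a) ^ 2 * (- -1 / (T - v) ^ 2) := by
  field_simp
  ring

private lemma alg2 (T xT s t x d : ℝ) (hts : t - s ≠ 0) (hTt : T - t ≠ 0) (hTs : T - s ≠ 0) :
    (1 / 2 : ℝ) * ((d - x) ^ 2 / (t - s) + (d - xT) ^ 2 / (T - t) -
        (x - xT) ^ 2 / (T - s)) =
      (d * (T - s) - x * (T - t) - xT * (t - s)) ^ 2 /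
        (2 * (T - s) * (T - t) * (t - s)) := by
  field_simp
  ring

private lemma alg1 (T xT s t x d : ℝ) (hts : t - s ≠ 0) (hTt : T - t ≠ 0) (hTs : T - s ≠ 0) :
    (1/2 : ℝ) * ((t - s) * ((d-x)/(t-s))^2 +
      ((xT - (fun v : ℝ => x + (d-x)/(t-s)*(v-s)) t)^2/(T-t)
        - (xT - (fun v : ℝ => x + (d-x)/(t-s)*(v-s)) s)^2/(T-s)))
    = (1/2)*((d-x)^2/(t-s)+(d-xT)^2/(T-t)-(x-xT)^2/(T-s)) := by
  field_simp
  ring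

private lemma key_identity (T xT s t : ℝ) (hst : s < t) (htT : t < T)
    (γ : ℝ → ℝ) (hγ : ContDiffOn ℝ 1 γ (Set.Icc s t)) :
    (∫ v in s..t, (derivWithin γ (Set.Icc s t) v - (xT - γ v) / (T - v)) ^ 2) =
      (∫ v in s..t, (derivWithin γ (Set.Icc s t) v) ^ 2) +
        ((xT - γ t) ^ 2 / (T - t) - (xT - γ s) ^ 2 / (T - s)) := by
  set g : ℝ → ℝ := derivWithin γ (Set.Icc s t) with hg
  have hud : UniqueDiffOn ℝ (Set.Icc s t) := uniqueDiffOn_Icc hst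
  have hγc : ContinuousOn γ (Set.Icc s t) := hγ.continuousOn
  have hgc : ContinuousOn g (Set.Icc s t) := hγ.continuousOn_derivWithin hud le_rfl
  have hTv : ∀ v ∈ Set.Icc s t, T - v ≠ 0 := fun v hv =>
    sub_ne_zero.mpr (lt_of_le_of_lt hv.2 htT).ne'
  have hγd : ∀ v ∈ Set.Ioo s t, HasDerivAt γ (g v) v := by
    intro v hv
    have h1 : DifferentiableWithinAt ℝ γ (Set.Icc s t) v :=
      (hγ.differentiableOn one_ne_zero) v (Set.Ioo_subset_Icc_self hv)
    exact h1.hasDerivWithinAt.hasDerivAt (Icc_mem_nhds hv.1 hv.2)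
  set D : ℝ → ℝ := fun v => (xT - γ v) ^ 2 / (T - v) ^ 2 -
    2 * g v * ((xT - γ v) / (T - v)) with hD
  set F : ℝ → ℝ := fun v => (xT - γ v) ^ 2 / (T - v) with hF
  have hFd : ∀ v ∈ Set.Ioo s t, HasDerivAt F (D v) v := by
    intro v hv
    have hT : T - v ≠ 0 := hTv v (Set.Ioo_subset_Icc_self hv)
    have h1 : HasDerivAt (fun w => (xT - γ w) ^ 2)
        ((2 : ℕ) * (xT - γ v) ^ 1 * (-(g v))) v := ((hγd v hv).const_sub xT).pow 2
    have h2 : HasDerivAt (fun w => (T - w)⁻¹) (-(-1) / (T - v) ^ 2) v :=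
      (((hasDerivAt_id v).const_sub T).inv hT)
    have h3 := h1.mul h2
    have : F = fun w => (xT - γ w) ^ 2 * (T - w)⁻¹ := by
      funext w; simp [hF, div_eq_mul_inv]
    rw [this]
    rw [show D v = _ from alg0 xT (γ v) (g v) T v hT]
    exact h3
  have hcont_inv : ContinuousOn (fun v : ℝ => T - v) (Set.Icc s t) :=
    continuousOn_const.sub continuousOn_id
  have hDc : ContinuousOn D (Set.Icc s t) := by
    apply ContinuousOn.sub
    · exact ((continuousOn_const.sub hγc).pow 2).div (hcont_inv.pow 2)
        (fun v hv => pow_ne_zero 2 (hTv v hv))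
    · exact (continuousOn_const.mul hgc).mul
        ((continuousOn_const.sub hγc).div hcont_inv hTv)
  have hFc : ContinuousOn F (Set.Icc s t) :=
    ((continuousOn_const.sub hγc).pow 2).div hcont_inv hTv
  have hDint : IntervalIntegrable D volume s t :=
    (by rwa [Set.uIcc_of_le hst.le] : ContinuousOn D (Set.uIcc s t)).intervalIntegrable
  have hg2int : IntervalIntegrable (fun v => g v ^ 2) volume s t :=
    (by rw [Set.uIcc_of_le hst.le]; exact hgc.pow 2 :
      ContinuousOn (fun v => g v ^ 2) (Set.uIcc s t)).intervalIntegrable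
  have intD : (∫ v in s..t, D v) = F t - F s :=
    integral_eq_sub_of_hasDerivAt_of_le hst.le hFc hFd hDint
  have hEq : Set.EqOn (fun v => (g v - (xT - γ v) / (T - v)) ^ 2)
      (fun v => g v ^ 2 + D v) (Set.uIcc s t) := by
    intro v hv
    rw [Set.uIcc_of_le hst.le] at hv
    have hT : T - v ≠ 0 := hTv v hv
    simp only [hD]
    field_simp
    ring
  rw [intervalIntegral.integral_congr hEq, intervalIntegral.integral_add hg2int hDint, intD]

private lemma ftc_gamma (s t : ℝ) (hst : s < t) (γ : ℝ → ℝ)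
    (hγ : ContDiffOn ℝ 1 γ (Set.Icc s t)) :
    (∫ v in s..t, derivWithin γ (Set.Icc s t) v) = γ t - γ s := by
  have hud : UniqueDiffOn ℝ (Set.Icc s t) := uniqueDiffOn_Icc hst
  have hgc : ContinuousOn (derivWithin γ (Set.Icc s t)) (Set.Icc s t) :=
    hγ.continuousOn_derivWithin hud le_rfl
  refine integral_eq_sub_of_hasDerivAt_of_le hst.le hγ.continuousOn ?_
    (by rwa [Set.uIcc_of_le hst.le] :
      ContinuousOn (derivWithin γ (Set.Icc s t)) (Set.uIcc s t)).intervalIntegrable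
  intro v hv
  exact ((hγ.differentiableOn one_ne_zero) v
    (Set.Ioo_subset_Icc_self hv)).hasDerivWithinAt.hasDerivAt (Icc_mem_nhds hv.1 hv.2)

theorem stmt_18 (T xT : ℝ) (hT : 0 < T)
    (s t x d : ℝ) (hs : 0 ≤ s) (hst : s < t) (htT : t < T) :
    sInf {r : ℝ | ∃ γ : ℝ → ℝ, ContDiffOn ℝ 1 γ (Set.Icc s t) ∧ γ s = x ∧ γ t = d ∧
        r = (1 / 2) * ∫ v in s..t,
          (derivWithin γ (Set.Icc s t) v - (xT - γ v) / (T - v)) ^ 2} =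
      (1 / 2) * ((d - x) ^ 2 / (t - s) + (d - xT) ^ 2 / (T - t) -
        (x - xT) ^ 2 / (T - s)) ∧
    (1 / 2) * ((d - x) ^ 2 / (t - s) + (d - xT) ^ 2 / (T - t) -
        (x - xT) ^ 2 / (T - s)) =
      (d * (T - s) - x * (T - t) - xT * (t - s)) ^ 2 /
        (2 * (T - s) * (T - t) * (t - s)) := by
  have hts : t - s ≠ 0 := sub_ne_zero.mpr hst.ne'
  have hTt : T - t ≠ 0 := sub_ne_zero.mpr htT.ne'
  have hTs : T - s ≠ 0 := sub_ne_zero.mpr (hst.trans htT).ne'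
  set L : ℝ := (1 / 2) * ((d - x) ^ 2 / (t - s) + (d - xT) ^ 2 / (T - t) -
    (x - xT) ^ 2 / (T - s)) with hL
  set S : Set ℝ := {r : ℝ | ∃ γ : ℝ → ℝ, ContDiffOn ℝ 1 γ (Set.Icc s t) ∧ γ s = x ∧ γ t = d ∧
    r = (1 / 2) * ∫ v in s..t,
      (derivWithin γ (Set.Icc s t) v - (xT - γ v) / (T - v)) ^ 2} with hS
  set c : ℝ := (d - x) / (t - s) with hc
  have hud : UniqueDiffOn ℝ (Set.Icc s t) := uniqueDiffOn_Icc hst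
  -- Membership: linear path
  have hmem : L ∈ S := by
    have hγ0 : ContDiffOn ℝ 1 (fun v : ℝ => x + c * (v - s)) (Set.Icc s t) :=
      (contDiff_const.add ((contDiff_id.sub contDiff_const).const_smul c)).contDiffOn
    have hder : ∀ v ∈ Set.Icc s t,
        derivWithin (fun v : ℝ => x + c * (v - s)) (Set.Icc s t) v = c := by
      intro v hv
      have h : HasDerivAt (fun v : ℝ => x + c * (v - s)) (c * 1) v :=
        (((hasDerivAt_id v).sub_const s).const_mul c).const_add x
      rw [h.hasDerivWithinAt.derivWithin (hud v hv)]
      ring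
    have hval : (1 / 2) * (∫ v in s..t,
        (derivWithin (fun v : ℝ => x + c * (v - s)) (Set.Icc s t) v
          - (xT - (x + c * (v - s))) / (T - v)) ^ 2) = L := by
      rw [key_identity T xT s t hst htT _ hγ0]
      have hcongr : (∫ v in s..t,
          (derivWithin (fun v : ℝ => x + c * (v - s)) (Set.Icc s t) v) ^ 2)
          = ∫ v in s..t, c ^ 2 := by
        apply intervalIntegral.integral_congr
        intro v hv
        rw [Set.uIcc_of_le hst.le] at hv
        simp [hder v hv]
      rw [hcongr, intervalIntegral.integral_const]
      simp only [smul_eq_mul, hL, hc]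
      exact alg1 T xT s t x d hts hTt hTs
    exact ⟨fun v => x + c * (v - s), hγ0, by simp, by simp only [hc]; field_simp; ring, hval.symm⟩
  -- Lower bound
  have hlow : ∀ r ∈ S, L ≤ r := by
    rintro r ⟨γ, hγ, hγs, hγt, rfl⟩
    set g : ℝ → ℝ := derivWithin γ (Set.Icc s t) with hg
    have hkey := key_identity T xT s t hst htT γ hγ
    rw [hγs, hγt] at hkey
    rw [hkey]
    have hgc : ContinuousOn g (Set.Icc s t) := hγ.continuousOn_derivWithin hud le_rfl
    have hgint : IntervalIntegrable g volume s t :=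
      (by rwa [Set.uIcc_of_le hst.le] : ContinuousOn g (Set.uIcc s t)).intervalIntegrable
    have hg2int : IntervalIntegrable (fun v => g v ^ 2) volume s t :=
      (by rw [Set.uIcc_of_le hst.le]; exact hgc.pow 2 :
        ContinuousOn (fun v => g v ^ 2) (Set.uIcc s t)).intervalIntegrable
    have hftc : (∫ v in s..t, g v) = d - x := by
      rw [ftc_gamma s t hst γ hγ, hγs, hγt]
    have hnonneg : (0 : ℝ) ≤ ∫ v in s..t, (g v - c) ^ 2 :=
      intervalIntegral.integral_nonneg hst.le (fun v hv => sq_nonneg _)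
    have hexp : (∫ v in s..t, (g v - c) ^ 2)
        = (∫ v in s..t, g v ^ 2) - 2 * c * (d - x) + c ^ 2 * (t - s) := by
      have h1 : ∀ v, (g v - c) ^ 2 = g v ^ 2 - 2 * c * g v + c ^ 2 := by
        intro v; ring
      simp_rw [h1]
      rw [intervalIntegral.integral_add (hg2int.sub (hgint.const_mul (2 * c)))
        intervalIntegrable_const,
        intervalIntegral.integral_sub hg2int (hgint.const_mul (2 * c)),
        intervalIntegral.integral_const_mul, hftc, intervalIntegral.integral_const]
      simp [smul_eq_mul]
      ring
    have hlb : (d - x) ^ 2 / (t - s) ≤ ∫ v in s..t, g v ^ 2 := by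
      rw [hexp] at hnonneg
      have hcval : 2 * c * (d - x) - c ^ 2 * (t - s) = (d - x) ^ 2 / (t - s) := by
        simp only [hc]; field_simp; ring
      linarith
    have e1 : (xT - d) ^ 2 = (d - xT) ^ 2 := by ring
    have e2 : (xT - x) ^ 2 = (x - xT) ^ 2 := by ring
    rw [e1, e2]
    simp only [hL]
    linarith [hlb]
  refine ⟨le_antisymm (csInf_le ⟨L, hlow⟩ hmem) (le_csInf ⟨L, hmem⟩ hlow), ?_⟩
  simp only [hL]
  exact alg2 T xT s t x d hts hTt hTs
end
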